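/- Let ν be a σ-finite reference measure on a measurable space, π_F and π_C strictly positive probability densities with respect to ν, q(·|·) a strictly positive proposal density, and p a probability mass function on the positive integers. Let q_C denote the Metropolis–Hastings kernel with target density π_C and proposal q. Then the Randomised-Length-Subchain Surrogate Transition kernel — which draws n ~ p, draws a proposal ψ from the n-fold composition q_Cⁿ started at the current state θ, and accepts ψ with probability min{1, (π_F(ψ) π_C(θ)) / (π_F(θ) π_C(ψ))}, otherwise remaining at θ — simulates a Markov chain that is in detailed balance with the measure having density π_F. (Lemma 2.3) -/

import Mathlib

open MeasureTheory ProbabilityTheory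

/-- The Metropolis–Hastings acceptance probability
`α(ψ|θ) = min{1, π(ψ) q(θ|ψ) / (π(θ) q(ψ|θ))}`, where `q θ ψ` denotes `q(ψ|θ)`. -/
noncomputable def mhAccept {E : Type*} (π : E → ℝ) (q : E → E → ℝ) (θ ψ : E) : ℝ :=
  min 1 (π ψ * q ψ θ / (π θ * q θ ψ))

/-- The Metropolis–Hastings transition measure
`K(θ, A) = ∫_A q(ψ|θ) α(ψ|θ) dν(ψ) + r(θ) δ_θ(A)`, where `r(θ)` is the total rejection
probability. -/
noncomputable def mhMeasure {E : Type*} [MeasurableSpace E] (ν : Measure E)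
    (π : E → ℝ) (q : E → E → ℝ) (θ : E) : Measure E :=
  ν.withDensity (fun ψ => ENNReal.ofReal (q θ ψ * mhAccept π q θ ψ)) +
    (1 - ∫⁻ ψ, ENNReal.ofReal (q θ ψ * mhAccept π q θ ψ) ∂ν) • Measure.dirac θ

/-- `kpow K n` is the `n`-fold composition `Kⁿ` of the kernel `K`. -/
noncomputable def kpow {E : Type*} [MeasurableSpace E] (K : Kernel E E) : ℕ → Kernel E E
  | 0 => Kernel.id
  | n + 1 => K ∘ₖ kpow K n

/-- The effective proposal measure of the Randomised-Length-Subchain Surrogate Transition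
algorithm: draw `n ~ p` and propose from the `n`-fold composition `q_Cⁿ` started at the
current state. -/
noncomputable def rstProposal {E : Type*} [MeasurableSpace E]
    (Q : Kernel E E) (p : ℕ+ → ENNReal) (θ : E) : Measure E :=
  Measure.sum (fun n : ℕ+ => p n • kpow Q (n : ℕ) θ)

/-- The Randomised-Length-Subchain Surrogate Transition kernel: propose
`ψ ~ ∑' n, p n • Qⁿ(θ, ·)` and accept with probability
`β(ψ|θ) = min{1, π_F(ψ) π_C(θ) / (π_F(θ) π_C(ψ))}`, otherwise remain at `θ`. -/
noncomputable def rstKernel {E : Type*} [MeasurableSpace E]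
    (Q : Kernel E E) (p : ℕ+ → ENNReal) (πF πC : E → ℝ) (θ : E) : Measure E :=
  (rstProposal Q p θ).withDensity
      (fun ψ => ENNReal.ofReal (min 1 (πF ψ * πC θ / (πF θ * πC ψ)))) +
    (1 - ∫⁻ ψ, ENNReal.ofReal (min 1 (πF ψ * πC θ / (πF θ * πC ψ))) ∂(rstProposal Q p θ)) •
      Measure.dirac θ

section RSTAux

open Function

variable {E : Type*} [MeasurableSpace E]

/-- `ℝ≥0∞`-scalar multiple of a kernel. -/
noncomputable def eSMul (c : ENNReal) (κ : Kernel E E) : Kernel E E where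
  toFun θ := c • κ θ
  measurable' := by
    refine Measure.measurable_of_measurable_coe _ fun s hs => ?_
    simp only [Measure.smul_apply, smul_eq_mul]
    exact (Kernel.measurable_coe κ hs).const_mul c

lemma eSMul_apply (c : ENNReal) (κ : Kernel E E) (θ : E) : eSMul c κ θ = c • κ θ := rfl

lemma isFiniteKernel_eSMul {c : ENNReal} (hc : c ≠ ⊤) (κ : Kernel E E) [IsMarkovKernel κ] :
    IsFiniteKernel (eSMul c κ) := by
  refine ⟨⟨c, hc.lt_top, fun a => ?_⟩⟩
  simp [eSMul_apply]

lemma meas_lint_left (κ : Kernel E E) [IsSFiniteKernel κ] {f : E → E → ENNReal}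
    (hf : Measurable (uncurry f)) :
    Measurable fun p : E × E => ∫⁻ b, f p.1 b ∂(κ p.2) := by
  have h : Measurable (uncurry fun (p : E × E) b => f p.1 b) :=
    hf.comp ((measurable_fst.comp measurable_fst).prodMk measurable_snd)
  have := Measurable.lintegral_kernel_prod_right (κ := κ.comap Prod.snd measurable_snd) h
  simpa [Kernel.comap_apply] using this

/-- The "detailed balance" (reversibility) property of a kernel `κ` with respect to the
measure with density `πC` relative to `ν`, phrased for arbitrary nonnegative measurable
functions of two variables. -/
def SwapDB (ν : Measure E) (πC : E → ℝ) (κ : Kernel E E) : Prop :=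
  ∀ f : E → E → ENNReal, Measurable (uncurry f) →
    ∫⁻ θ, ENNReal.ofReal (πC θ) * ∫⁻ ψ, f θ ψ ∂(κ θ) ∂ν =
      ∫⁻ θ, ENNReal.ofReal (πC θ) * ∫⁻ ψ, f ψ θ ∂(κ θ) ∂ν

instance instKpowMarkov (Q : Kernel E E) [IsMarkovKernel Q] (n : ℕ) :
    IsMarkovKernel (kpow Q n) := by
  induction n with
  | zero => unfold kpow; infer_instance
  | succ n ih => unfold kpow; infer_instance

lemma kpow_comm (Q : Kernel E E) [IsMarkovKernel Q] (n : ℕ) :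
    kpow Q n ∘ₖ Q = Q ∘ₖ kpow Q n := by
  induction n with
  | zero => unfold kpow; rw [Kernel.id_comp, Kernel.comp_id]
  | succ n ih => unfold kpow; rw [Kernel.comp_assoc, ih]

/-- The Metropolis–Hastings kernel is in detailed balance with its target. -/
lemma swapDB_mh (ν : Measure E) [SigmaFinite ν] (πC : E → ℝ)
    (hπCpos : ∀ x, 0 < πC x) (hπCmeas : Measurable πC)
    (q : E → E → ℝ) (hqpos : ∀ x y, 0 < q x y) (hqmeas : Measurable (uncurry q))
    (Q : Kernel E E) (hQ : ∀ θ, Q θ = mhMeasure ν πC q θ) :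
    SwapDB ν πC Q := by
  intro f hf
  set a : E → E → ENNReal := fun θ ψ => ENNReal.ofReal (q θ ψ * mhAccept πC q θ ψ) with ha
  have hqswap : Measurable fun p : E × E => q p.2 p.1 :=
    hqmeas.comp (measurable_snd.prodMk measurable_fst)
  have hacc : Measurable fun p : E × E => mhAccept πC q p.1 p.2 := by
    unfold mhAccept
    exact measurable_const.min (((hπCmeas.comp measurable_snd).mul hqswap).div
      ((hπCmeas.comp measurable_fst).mul hqmeas))
  have hauncurry : Measurable (uncurry a) := (hqmeas.mul hacc).ennreal_ofReal
  set M : E → E → ENNReal := fun θ ψ => ENNReal.ofReal (min (πC θ * q θ ψ) (πC ψ * q ψ θ))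
    with hM
  have hMuncurry : Measurable (uncurry M) := by
    apply Measurable.ennreal_ofReal
    exact ((hπCmeas.comp measurable_fst).mul hqmeas).min
      ((hπCmeas.comp measurable_snd).mul hqswap)
  have hMsymm : ∀ θ ψ, M ψ θ = M θ ψ := fun θ ψ => by
    simp only [hM]; rw [min_comm]
  have hkey : ∀ θ ψ, ENNReal.ofReal (πC θ) * a θ ψ = M θ ψ := by
    intro θ ψ
    simp only [ha, hM]
    rw [← ENNReal.ofReal_mul (hπCpos θ).le]
    congr 1
    have hpos : 0 < πC θ * q θ ψ := mul_pos (hπCpos θ) (hqpos θ ψ)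
    unfold mhAccept
    rw [← mul_assoc, mul_min_of_nonneg _ _ hpos.le, mul_one,
      mul_div_cancel₀ _ hpos.ne']
  have expand : ∀ (g : E → ENNReal), Measurable g → ∀ θ,
      ∫⁻ ψ, g ψ ∂(Q θ) = (∫⁻ ψ, a θ ψ * g ψ ∂ν) + (1 - ∫⁻ ψ, a θ ψ ∂ν) * g θ := by
    intro g hg θ
    rw [hQ θ]
    unfold mhMeasure
    rw [lintegral_add_measure, lintegral_smul_measure,
      lintegral_dirac' _ hg,
      lintegral_withDensity_eq_lintegral_mul ν (hauncurry.of_uncurry_left) hg]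
    simp [smul_eq_mul]
    rfl
  have main : ∀ (g : E → E → ENNReal), Measurable (uncurry g) →
      ∫⁻ θ, ENNReal.ofReal (πC θ) * ∫⁻ ψ, g θ ψ ∂(Q θ) ∂ν =
        (∫⁻ θ, ∫⁻ ψ, M θ ψ * g θ ψ ∂ν ∂ν) +
          ∫⁻ θ, ENNReal.ofReal (πC θ) * ((1 - ∫⁻ ψ, a θ ψ ∂ν) * g θ θ) ∂ν := by
    intro g hg
    have h1 : ∀ θ, ENNReal.ofReal (πC θ) * ∫⁻ ψ, g θ ψ ∂(Q θ) =
        (∫⁻ ψ, M θ ψ * g θ ψ ∂ν) +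
          ENNReal.ofReal (πC θ) * ((1 - ∫⁻ ψ, a θ ψ ∂ν) * g θ θ) := by
      intro θ
      rw [expand (g θ) (hg.of_uncurry_left) θ, mul_add]
      congr 1
      rw [← lintegral_const_mul' _ _ ENNReal.ofReal_ne_top]
      refine lintegral_congr fun ψ => ?_
      rw [← mul_assoc, hkey]
    rw [lintegral_congr h1]
    exact lintegral_add_left (Measurable.lintegral_prod_right
      (f := fun θ ψ => M θ ψ * g θ ψ) (hMuncurry.mul hg)) _
  rw [main f hf, main (fun θ ψ => f ψ θ) (hf.comp measurable_swap)]
  congr 1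
  rw [lintegral_lintegral_swap (f := fun θ ψ => M θ ψ * f θ ψ) (hMuncurry.mul hf).aemeasurable]
  refine lintegral_congr fun ψ => lintegral_congr fun θ => ?_
  rw [hMsymm]

/-- Detailed balance is preserved under composition with a commuting reversible kernel. -/
lemma swapDB_comp (ν : Measure E) [SigmaFinite ν] (πC : E → ℝ)
    {κ η : Kernel E E} [IsMarkovKernel κ] [IsMarkovKernel η]
    (hκ : SwapDB ν πC κ) (hη : SwapDB ν πC η) (hcomm : κ ∘ₖ η = η ∘ₖ κ) :
    SwapDB ν πC (κ ∘ₖ η) := by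
  intro f hf
  have hF : Measurable (uncurry fun θ b => ∫⁻ c, f θ c ∂(κ b)) := meas_lint_left κ hf
  have hG : Measurable (uncurry fun θ c => ∫⁻ b, f b c ∂(η θ)) := by
    have h0 : Measurable (uncurry fun (x y : E) => f y x) := hf.comp measurable_swap
    exact (meas_lint_left η h0).comp measurable_swap
  calc ∫⁻ θ, ENNReal.ofReal (πC θ) * ∫⁻ c, f θ c ∂((κ ∘ₖ η) θ) ∂ν
      = ∫⁻ θ, ENNReal.ofReal (πC θ) * ∫⁻ b, (∫⁻ c, f θ c ∂(κ b)) ∂(η θ) ∂ν := by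
        refine lintegral_congr fun θ => ?_
        rw [Kernel.lintegral_comp κ η θ (hf.of_uncurry_left)]
    _ = ∫⁻ θ, ENNReal.ofReal (πC θ) * ∫⁻ b, (∫⁻ c, f b c ∂(κ θ)) ∂(η θ) ∂ν :=
        hη _ hF
    _ = ∫⁻ θ, ENNReal.ofReal (πC θ) * ∫⁻ c, (∫⁻ b, f b c ∂(η θ)) ∂(κ θ) ∂ν := by
        refine lintegral_congr fun θ => ?_
        congr 1
        exact lintegral_lintegral_swap hf.aemeasurable
    _ = ∫⁻ θ, ENNReal.ofReal (πC θ) * ∫⁻ c, (∫⁻ b, f b θ ∂(η c)) ∂(κ θ) ∂ν :=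
        hκ _ hG
    _ = ∫⁻ θ, ENNReal.ofReal (πC θ) * ∫⁻ b, f b θ ∂((η ∘ₖ κ) θ) ∂ν := by
        refine lintegral_congr fun θ => ?_
        rw [Kernel.lintegral_comp η κ θ (hf.of_uncurry_right)]
    _ = _ := by rw [← hcomm]

/-- Powers of a reversible kernel are reversible. -/
lemma swapDB_kpow (ν : Measure E) [SigmaFinite ν] (πC : E → ℝ)
    (Q : Kernel E E) [IsMarkovKernel Q] (hQ : SwapDB ν πC Q) (n : ℕ) :
    SwapDB ν πC (kpow Q n) := by
  induction n with
  | zero =>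
    intro f hf
    unfold kpow
    refine lintegral_congr fun θ => ?_
    rw [Kernel.id_apply, lintegral_dirac' _ (hf.of_uncurry_left),
      lintegral_dirac' _ (hf.of_uncurry_right)]
  | succ n ih =>
    unfold kpow
    exact swapDB_comp ν πC hQ ih (kpow_comm Q n).symm

/-- The RST proposal as a bona fide kernel. -/
noncomputable def rstKer (Q : Kernel E E) (p : ℕ+ → ENNReal) : Kernel E E :=
  Kernel.sum fun n : ℕ+ => eSMul (p n) (kpow Q (n : ℕ))

lemma rstKer_apply (Q : Kernel E E) (p : ℕ+ → ENNReal) (θ : E) :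
    rstKer Q p θ = rstProposal Q p θ := by
  rw [rstKer, Kernel.sum_apply]; rfl

lemma isSFiniteKernel_rstKer (Q : Kernel E E) [IsMarkovKernel Q] (p : ℕ+ → ENNReal)
    (hp : ∀ n, p n ≠ ⊤) : IsSFiniteKernel (rstKer Q p) := by
  have : ∀ n, IsSFiniteKernel (eSMul (p n) (kpow Q (n : ℕ))) := fun n => by
    haveI := isFiniteKernel_eSMul (hp n) (kpow Q (n : ℕ))
    infer_instance
  unfold rstKer
  exact Kernel.isSFiniteKernel_sum

lemma lintegral_rstProposal (Q : Kernel E E) (p : ℕ+ → ENNReal) (θ : E) (g : E → ENNReal) :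
    ∫⁻ ψ, g ψ ∂(rstProposal Q p θ) = ∑' n : ℕ+, p n * ∫⁻ ψ, g ψ ∂(kpow Q (n : ℕ) θ) := by
  rw [rstProposal, lintegral_sum_measure]
  exact tsum_congr fun n => lintegral_smul_measure _ _

/-- The RST proposal is in detailed balance with `π_C · ν`. -/
lemma swap_rstProposal (ν : Measure E) [SigmaFinite ν] (πC : E → ℝ) (hπCmeas : Measurable πC)
    (Q : Kernel E E) [IsMarkovKernel Q] (hQ : SwapDB ν πC Q)
    (p : ℕ+ → ENNReal) (hp : ∀ n, p n ≠ ⊤) :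
    ∀ f : E → E → ENNReal, Measurable (uncurry f) →
      ∫⁻ θ, ENNReal.ofReal (πC θ) * ∫⁻ ψ, f θ ψ ∂(rstProposal Q p θ) ∂ν =
        ∫⁻ θ, ENNReal.ofReal (πC θ) * ∫⁻ ψ, f ψ θ ∂(rstProposal Q p θ) ∂ν := by
  intro f hf
  have hterm : ∀ (g : E → E → ENNReal), Measurable (uncurry g) →
      ∫⁻ θ, ENNReal.ofReal (πC θ) * ∫⁻ ψ, g θ ψ ∂(rstProposal Q p θ) ∂ν =
        ∑' n : ℕ+, p n * ∫⁻ θ, ENNReal.ofReal (πC θ) *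
          ∫⁻ ψ, g θ ψ ∂(kpow Q (n : ℕ) θ) ∂ν := by
    intro g hg
    have h1 : ∀ θ, ENNReal.ofReal (πC θ) * ∫⁻ ψ, g θ ψ ∂(rstProposal Q p θ) =
        ∑' n : ℕ+, p n * (ENNReal.ofReal (πC θ) * ∫⁻ ψ, g θ ψ ∂(kpow Q (n : ℕ) θ)) := by
      intro θ
      rw [lintegral_rstProposal, ← ENNReal.tsum_mul_left]
      exact tsum_congr fun n => mul_left_comm _ _ _
    rw [lintegral_congr h1, lintegral_tsum fun n => ?_]
    · exact tsum_congr fun n => lintegral_const_mul' _ _ (hp n)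
    · refine (measurable_const.mul (hπCmeas.ennreal_ofReal.mul ?_)).aemeasurable
      exact Measurable.lintegral_kernel_prod_right (κ := kpow Q (n : ℕ)) hg
  rw [hterm f hf, hterm (fun x y => f y x) (hf.comp measurable_swap)]
  refine tsum_congr fun n => ?_
  congr 1
  exact swapDB_kpow ν πC Q hQ (n : ℕ) f hf

/-- The RST acceptance probability. -/
noncomputable def auxβ (πF πC : E → ℝ) (θ ψ : E) : ENNReal :=
  ENNReal.ofReal (min 1 (πF ψ * πC θ / (πF θ * πC ψ)))

/-- The symmetrised ratio `min(π_F(θ)/π_C(θ), π_F(ψ)/π_C(ψ))`. -/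
noncomputable def auxS (πF πC : E → ℝ) (θ ψ : E) : ENNReal :=
  ENNReal.ofReal (min (πF θ / πC θ) (πF ψ / πC ψ))

/-- Total RST acceptance probability from `θ`. -/
noncomputable def auxI (Q : Kernel E E) (p : ℕ+ → ENNReal) (πF πC : E → ℝ) (θ : E) : ENNReal :=
  ∫⁻ ψ, auxβ πF πC θ ψ ∂(rstProposal Q p θ)

lemma auxS_symm (πF πC : E → ℝ) (θ ψ : E) : auxS πF πC ψ θ = auxS πF πC θ ψ := by
  unfold auxS; rw [min_comm]

lemma rstKernel_apply' (Q : Kernel E E) (p : ℕ+ → ENNReal) (πF πC : E → ℝ) (θ : E)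
    {C : Set E} (hC : MeasurableSet C) :
    rstKernel Q p πF πC θ C =
      (∫⁻ ψ, C.indicator 1 ψ * auxβ πF πC θ ψ ∂(rstProposal Q p θ)) +
        (1 - auxI Q p πF πC θ) * C.indicator 1 θ := by
  unfold auxI auxβ
  rw [rstKernel, Measure.add_apply, withDensity_apply _ hC, Measure.smul_apply,
    Measure.dirac_apply' _ hC, smul_eq_mul, ← lintegral_indicator hC]
  congr 1
  refine lintegral_congr fun ψ => ?_
  by_cases h : ψ ∈ C <;> simp [h]

end RSTAux

/-- **Lemma 2.3 (Randomised-Length-Subchain Surrogate Transition).** Let `ν` be a σ-finite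
reference measure, `π_F, π_C` strictly positive probability densities with respect to `ν`,
`q` a strictly positive proposal density, and `p` a probability mass function on the
positive integers. Let `Q` be the Metropolis–Hastings kernel with target `π_C` and
proposal `q`. Then the RST kernel — which draws `n ~ p`, draws a proposal `ψ` from the
`n`-fold composition `Qⁿ` started at the current state `θ`, and accepts `ψ` with
probability `min{1, π_F(ψ) π_C(θ) / (π_F(θ) π_C(ψ))}`, otherwise remaining at `θ` —
simulates a Markov chain in detailed balance with the measure having density `π_F`. -/
theorem rstKernel_detailedBalance
    {E : Type*} [MeasurableSpace E] (ν : Measure E) [SigmaFinite ν]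
    (πF πC : E → ℝ)
    (hπFpos : ∀ x, 0 < πF x) (hπFmeas : Measurable πF)
    (hπFdens : ∫⁻ x, ENNReal.ofReal (πF x) ∂ν = 1)
    (hπCpos : ∀ x, 0 < πC x) (hπCmeas : Measurable πC)
    (hπCdens : ∫⁻ x, ENNReal.ofReal (πC x) ∂ν = 1)
    (q : E → E → ℝ) (hqpos : ∀ x y, 0 < q x y) (hqmeas : Measurable (Function.uncurry q))
    (hqdens : ∀ θ, ∫⁻ ψ, ENNReal.ofReal (q θ ψ) ∂ν = 1)
    (p : ℕ+ → ENNReal) (hp : ∑' n : ℕ+, p n = 1)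
    (Q : Kernel E E) [IsMarkovKernel Q]
    (hQ : ∀ θ, Q θ = mhMeasure ν πC q θ) :
    ∀ A B : Set E, MeasurableSet A → MeasurableSet B →
      ∫⁻ θ in A, rstKernel Q p πF πC θ B ∂(ν.withDensity fun x => ENNReal.ofReal (πF x)) =
        ∫⁻ θ in B, rstKernel Q p πF πC θ A ∂(ν.withDensity fun x => ENNReal.ofReal (πF x)) := by
  intro A B hA hB
  classical
  have hpn : ∀ n, p n ≠ ⊤ := fun n =>
    (((ENNReal.le_tsum n).trans hp.le).trans_lt ENNReal.one_lt_top).ne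
  haveI hsf : IsSFiniteKernel (rstKer Q p) := isSFiniteKernel_rstKer Q p hpn
  have hβm : Measurable (Function.uncurry (auxβ πF πC)) := by
    unfold auxβ
    apply Measurable.ennreal_ofReal
    exact measurable_const.min
      (((hπFmeas.comp measurable_snd).mul (hπCmeas.comp measurable_fst)).div
        ((hπFmeas.comp measurable_fst).mul (hπCmeas.comp measurable_snd)))
  have hSm : Measurable (Function.uncurry (auxS πF πC)) := by
    unfold auxS
    apply Measurable.ennreal_ofReal
    exact ((hπFmeas.comp measurable_fst).div (hπCmeas.comp measurable_fst)).min
      ((hπFmeas.comp measurable_snd).div (hπCmeas.comp measurable_snd))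
  have key2 : ∀ θ ψ, ENNReal.ofReal (πF θ) * auxβ πF πC θ ψ =
      ENNReal.ofReal (πC θ) * auxS πF πC θ ψ := by
    intro θ ψ
    unfold auxβ auxS
    rw [← ENNReal.ofReal_mul (hπFpos θ).le, ← ENNReal.ofReal_mul (hπCpos θ).le]
    congr 1
    rw [mul_min_of_nonneg _ _ (hπFpos θ).le, mul_min_of_nonneg _ _ (hπCpos θ).le, mul_one]
    have h1 := (hπFpos θ).ne'
    have h2 := (hπCpos θ).ne'
    have h3 := (hπCpos ψ).ne'
    congr 1
    · field_simp
    · field_simp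
  have hlint_meas : ∀ (F : E → E → ENNReal), Measurable (Function.uncurry F) →
      Measurable fun θ => ∫⁻ ψ, F θ ψ ∂(rstProposal Q p θ) := by
    intro F hF
    have : Measurable fun θ => ∫⁻ ψ, F θ ψ ∂(rstKer Q p θ) :=
      Measurable.lintegral_kernel_prod_right (κ := rstKer Q p) hF
    simpa only [rstKer_apply] using this
  have hIm : Measurable (auxI Q p πF πC) := hlint_meas _ hβm
  have hg : ∀ (C : Set E), MeasurableSet C →
      Measurable (fun θ => rstKernel Q p πF πC θ C) := by
    intro C hC
    have heq : (fun θ => rstKernel Q p πF πC θ C) =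
        fun θ => (∫⁻ ψ, C.indicator 1 ψ * auxβ πF πC θ ψ ∂(rstProposal Q p θ)) +
          (1 - auxI Q p πF πC θ) * C.indicator 1 θ :=
      funext fun θ => rstKernel_apply' Q p πF πC θ hC
    rw [heq]
    refine Measurable.add ?_ ((measurable_const.sub hIm).mul (measurable_one.indicator hC))
    exact hlint_meas _ (((measurable_one.indicator hC).comp measurable_snd).mul hβm)
  have hπF'm : Measurable fun θ => ENNReal.ofReal (πF θ) := hπFmeas.ennreal_ofReal
  have hmain : ∀ (C D : Set E), MeasurableSet C → MeasurableSet D →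
      ∫⁻ θ in C, rstKernel Q p πF πC θ D ∂(ν.withDensity fun x => ENNReal.ofReal (πF x)) =
        (∫⁻ θ, ENNReal.ofReal (πC θ) *
          ∫⁻ ψ, (C.indicator 1 θ * (D.indicator 1 ψ * auxS πF πC θ ψ))
            ∂(rstProposal Q p θ) ∂ν) +
        ∫⁻ θ, (C.indicator 1 θ * D.indicator 1 θ) *
          (ENNReal.ofReal (πF θ) * (1 - auxI Q p πF πC θ)) ∂ν := by
    intro C D hC hD
    rw [setLIntegral_withDensity_eq_setLIntegral_mul ν hπF'm (hg D hD) hC,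
      ← lintegral_indicator hC]
    have hpoint : ∀ θ,
        C.indicator ((fun x => ENNReal.ofReal (πF x)) *
          fun θ => rstKernel Q p πF πC θ D) θ =
        ENNReal.ofReal (πC θ) *
          (∫⁻ ψ, (C.indicator 1 θ * (D.indicator 1 ψ * auxS πF πC θ ψ))
            ∂(rstProposal Q p θ)) +
        (C.indicator 1 θ * D.indicator 1 θ) *
          (ENNReal.ofReal (πF θ) * (1 - auxI Q p πF πC θ)) := by
      intro θ
      by_cases hθ : θ ∈ C
      · simp only [Set.indicator_of_mem hθ, Pi.mul_apply, Pi.one_apply, one_mul]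
        rw [rstKernel_apply' Q p πF πC θ hD, mul_add]
        congr 1
        · rw [← lintegral_const_mul' _ _ ENNReal.ofReal_ne_top,
            ← lintegral_const_mul' _ _ ENNReal.ofReal_ne_top]
          refine lintegral_congr fun ψ => ?_
          by_cases hψ : ψ ∈ D
          · simp only [Set.indicator_of_mem hψ, Pi.one_apply, one_mul]
            exact key2 θ ψ
          · simp [Set.indicator_of_notMem hψ]
        · ring
      · simp [Set.indicator_of_notMem hθ]
    rw [lintegral_congr hpoint]
    refine lintegral_add_left ?_ _
    exact hπCmeas.ennreal_ofReal.mul (hlint_meas _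
      (((measurable_one.indicator hC).comp measurable_fst).mul
        (((measurable_one.indicator hD).comp measurable_snd).mul hSm)))
  rw [hmain A B hA hB, hmain B A hB hA]
  congr 1
  · have hfm : Measurable (Function.uncurry
        fun θ ψ => A.indicator 1 θ * (B.indicator 1 ψ * auxS πF πC θ ψ)) :=
      ((measurable_one.indicator hA).comp measurable_fst).mul
        (((measurable_one.indicator hB).comp measurable_snd).mul hSm)
    refine (swap_rstProposal ν πC hπCmeas Q
      (swapDB_mh ν πC hπCpos hπCmeas q hqpos hqmeas Q hQ) p hpn
      (fun θ ψ => A.indicator 1 θ * (B.indicator 1 ψ * auxS πF πC θ ψ)) hfm).trans ?_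
    refine lintegral_congr fun θ => ?_
    congr 1
    refine lintegral_congr fun ψ => ?_
    show A.indicator 1 ψ * (B.indicator 1 θ * auxS πF πC ψ θ) =
      B.indicator 1 θ * (A.indicator 1 ψ * auxS πF πC θ ψ)
    rw [auxS_symm]
    ring
  · refine lintegral_congr fun θ => ?_
    ring
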